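/- The following are equivalent: (i) every A ∈ 𝒜 is an M-𝒜-injective left R-module; (ii) every A ∈ 𝒜 is a direct summand of M; (iii) every left R-module is M-𝒜-injective. -/

import Mathlib

open TensorProduct MulOpposite CategoryTheory

universe u

section NC

variable (R : Type u) [Ring R]

/-- The defining relations of the tensor product `N ⊗[R] X` of a right `R`-module `N`
and a left `R`-module `X` over a (possibly noncommutative) ring `R`, inside `N ⊗[ℤ] X`. -/
def ncRel (N : Type u) [AddCommGroup N] [Module Rᵐᵒᵖ N]
    (X : Type u) [AddCommGroup X] [Module R X] : Submodule ℤ (N ⊗[ℤ] X) :=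
  Submodule.span ℤ {z | ∃ (r : R) (n : N) (x : X), z = (op r • n) ⊗ₜ[ℤ] x - n ⊗ₜ[ℤ] (r • x)}

/-- The tensor product `N ⊗[R] X` of a right `R`-module `N` and a left `R`-module `X`
over a (possibly noncommutative) ring `R`. -/
abbrev NCTensor (N : Type u) [AddCommGroup N] [Module Rᵐᵒᵖ N]
    (X : Type u) [AddCommGroup X] [Module R X] : Type u :=
  (N ⊗[ℤ] X) ⧸ ncRel R N X

/-- Functoriality of the tensor product in the left (right-module) variable. -/
noncomputable def ncMapL {N N' : Type u} [AddCommGroup N] [Module Rᵐᵒᵖ N]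
    [AddCommGroup N'] [Module Rᵐᵒᵖ N'] (g : N →ₗ[Rᵐᵒᵖ] N')
    (X : Type u) [AddCommGroup X] [Module R X] :
    NCTensor R N X →ₗ[ℤ] NCTensor R N' X :=
  Submodule.mapQ _ _ (LinearMap.rTensor X g.toAddMonoidHom.toIntLinearMap) (by
    rw [ncRel, Submodule.span_le]
    rintro _ ⟨r, n, x, rfl⟩
    simp only [SetLike.mem_coe, Submodule.mem_comap, map_sub, LinearMap.rTensor_tmul]
    have h : g.toAddMonoidHom.toIntLinearMap (op r • n) =
        op r • g.toAddMonoidHom.toIntLinearMap n := by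
      simp [map_smul]
    erw [Submodule.mem_comap, map_sub, LinearMap.rTensor_tmul, LinearMap.rTensor_tmul, h]
    exact Submodule.subset_span ⟨r, g n, x, rfl⟩)

/-- Functoriality of the tensor product in the right (left-module) variable. -/
noncomputable def ncMap (N : Type u) [AddCommGroup N] [Module Rᵐᵒᵖ N]
    {X Y : Type u} [AddCommGroup X] [Module R X] [AddCommGroup Y] [Module R Y]
    (f : X →ₗ[R] Y) : NCTensor R N X →ₗ[ℤ] NCTensor R N Y :=
  Submodule.mapQ _ _ (LinearMap.lTensor N f.toAddMonoidHom.toIntLinearMap) (by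
    rw [ncRel, Submodule.span_le]
    rintro _ ⟨r, n, x, rfl⟩
    simp only [SetLike.mem_coe, Submodule.mem_comap, map_sub, LinearMap.lTensor_tmul]
    have h : f.toAddMonoidHom.toIntLinearMap (r • x) =
        r • f.toAddMonoidHom.toIntLinearMap x := by
      simp [map_smul]
    erw [Submodule.mem_comap, map_sub, LinearMap.lTensor_tmul, LinearMap.lTensor_tmul, h]
    exact Submodule.subset_span ⟨r, n, f x, rfl⟩)

lemma ncMap_mk (N : Type u) [AddCommGroup N] [Module Rᵐᵒᵖ N]
    {X Y : Type u} [AddCommGroup X] [Module R X] [AddCommGroup Y] [Module R Y]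
    (f : X →ₗ[R] Y) (w : N ⊗[ℤ] X) :
    ncMap R N f (Submodule.Quotient.mk w) =
      Submodule.Quotient.mk (LinearMap.lTensor N f.toAddMonoidHom.toIntLinearMap w) := by
  unfold ncMap
  exact Submodule.mapQ_apply (p := ncRel R N X) (q := ncRel R N Y) (LinearMap.lTensor N f.toAddMonoidHom.toIntLinearMap) w

section lemmas

variable {R}
variable {X Y Z : Type u} [AddCommGroup X] [Module R X] [AddCommGroup Y] [Module R Y]
  [AddCommGroup Z] [Module R Z]

lemma toInt_id : ((LinearMap.id : X →ₗ[R] X).toAddMonoidHom).toIntLinearMap =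
    (LinearMap.id : X →ₗ[ℤ] X) := rfl

lemma toInt_comp (f : X →ₗ[R] Y) (g : Y →ₗ[R] Z) :
    ((g ∘ₗ f).toAddMonoidHom).toIntLinearMap =
      g.toAddMonoidHom.toIntLinearMap ∘ₗ f.toAddMonoidHom.toIntLinearMap := rfl

lemma toInt_add (f g : X →ₗ[R] Y) :
    ((f + g).toAddMonoidHom).toIntLinearMap =
      f.toAddMonoidHom.toIntLinearMap + g.toAddMonoidHom.toIntLinearMap := rfl

end lemmas

/-- The functor `N ⊗[R] - : R-Mod ⥤ Ab` for a right `R`-module `N`. -/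
noncomputable def ncTensorFunctor (N : Type u) [AddCommGroup N] [Module Rᵐᵒᵖ N] :
    ModuleCat.{u} R ⥤ ModuleCat.{u} ℤ where
  obj X := ModuleCat.of ℤ (NCTensor R N X)
  map {X Y} f := ModuleCat.ofHom (ncMap R N f.hom)
  map_id X := by
    refine ModuleCat.hom_ext (LinearMap.ext fun z => ?_)
    obtain ⟨w, rfl⟩ := Submodule.Quotient.mk_surjective _ z
    show ncMap R N (LinearMap.id : X →ₗ[R] X) (Submodule.Quotient.mk w) = Submodule.Quotient.mk w
    rw [ncMap_mk, toInt_id, LinearMap.lTensor_id]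
    rfl
  map_comp {X Y Z} f g := by
    refine ModuleCat.hom_ext (LinearMap.ext fun z => ?_)
    obtain ⟨w, rfl⟩ := Submodule.Quotient.mk_surjective _ z
    show ncMap R N (g.hom ∘ₗ f.hom) (Submodule.Quotient.mk w) = ncMap R N g.hom (ncMap R N f.hom (Submodule.Quotient.mk w))
    rw [ncMap_mk, ncMap_mk, ncMap_mk, toInt_comp, LinearMap.lTensor_comp]
    rfl

instance ncTensorFunctor_additive (N : Type u) [AddCommGroup N] [Module Rᵐᵒᵖ N] :
    (ncTensorFunctor R N).Additive where
  map_add {X Y f g} := by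
    refine ModuleCat.hom_ext (LinearMap.ext fun z => ?_)
    obtain ⟨w, rfl⟩ := Submodule.Quotient.mk_surjective _ z
    show ncMap R N (f.hom + g.hom) (Submodule.Quotient.mk w) = ncMap R N f.hom (Submodule.Quotient.mk w) + ncMap R N g.hom (Submodule.Quotient.mk w)
    rw [ncMap_mk, ncMap_mk, ncMap_mk, toInt_add, LinearMap.lTensor_add]
    rfl

/-- `Tor₁^R(N, Z)` for a right `R`-module `N` and a left `R`-module `Z`, defined as the value at
`Z` of the first left derived functor of the functor `N ⊗[R] -`. -/
noncomputable def ncTor1 (N : Type u) [AddCommGroup N] [Module Rᵐᵒᵖ N]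
    (Z : Type u) [AddCommGroup Z] [Module R Z] : ModuleCat.{u} ℤ :=
  (((ncTensorFunctor R N).leftDerived 1).obj (ModuleCat.of R Z))

/-- `Tor₁^R(N, Z) = 0`. -/
def Tor1IsZero (N : Type u) [AddCommGroup N] [Module Rᵐᵒᵖ N]
    (Z : Type u) [AddCommGroup Z] [Module R Z] : Prop :=
  Limits.IsZero (ncTor1 R N Z)

/-- `Ext¹_R(Z, T) = 0`, where `Ext` is the derived functor of `Hom` on the category
of left `R`-modules. -/
def Ext1IsZero (Z T : Type u) [AddCommGroup Z] [Module R Z] [AddCommGroup T] [Module R T] :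
    Prop :=
  Limits.IsZero ((((Ext ℤ (ModuleCat.{u} R) 1).obj (Opposite.op (ModuleCat.of R Z))).obj
    (ModuleCat.of R T)))

end NC

open MulOpposite


section Char

variable (R : Type u) [Ring R]

/-- The right `R`-module structure on the character module `A⁺ = Hom_ℤ(A, ℚ/ℤ)` of a left
`R`-module `A`, given by `(c • r) (a) = c (r • a)`. -/
instance charModuleRight (A : Type u) [AddCommGroup A] [Module R A] :
    Module Rᵐᵒᵖ (CharacterModule A) where
  smul r c := (c.comp (DistribMulAction.toAddMonoidHom A r.unop) : A →+ _)
  one_smul c := DFunLike.ext _ _ fun a => congrArg c (one_smul R a)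
  mul_smul r s c := DFunLike.ext _ _ fun a => congrArg c (mul_smul s.unop r.unop a)
  smul_zero r := rfl
  smul_add r c c' := rfl
  add_smul r s c := DFunLike.ext _ _ fun a => by
    show c ((r.unop + s.unop) • a) = c (r.unop • a) + c (s.unop • a)
    rw [add_smul, map_add]
  zero_smul c := DFunLike.ext _ _ fun a => by
    show c ((0 : R) • a) = 0
    rw [zero_smul, map_zero]

/-- The left `R`-module structure on the character module `N⁺ = Hom_ℤ(N, ℚ/ℤ)` of a right
`R`-module `N`, given by `(r • c) (n) = c (n • r)`. -/
instance charModuleLeft (N : Type u) [AddCommGroup N] [Module Rᵐᵒᵖ N] :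
    Module R (CharacterModule N) where
  smul r c := (c.comp (DistribMulAction.toAddMonoidHom N (op r)) : N →+ _)
  one_smul c := DFunLike.ext _ _ fun n => congrArg c (one_smul Rᵐᵒᵖ n)
  mul_smul r s c := DFunLike.ext _ _ fun n => congrArg c (mul_smul (op s) (op r) n)
  smul_zero r := rfl
  smul_add r c c' := rfl
  add_smul r s c := DFunLike.ext _ _ fun n => by
    show c ((op r + op s) • n) = c (op r • n) + c (op s • n)
    rw [add_smul, map_add]
  zero_smul c := DFunLike.ext _ _ fun n => by
    show c ((0 : Rᵐᵒᵖ) • n) = 0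
    rw [zero_smul, map_zero]

end Char

section Classes

variable (R : Type u) [Ring R] (M : Type u) [AddCommGroup M] [Module R M]

/-- `T` is `M`-`𝒜`-injective if, for every `A ∈ 𝒜`, every homomorphism `A → T` extends to `M`,
i.e. the restriction map `Hom(M, T) → Hom(A, T)` is surjective. -/
def MAInjective (𝒜 : Set (Submodule R M)) (T : Type u) [AddCommGroup T] [Module R T] : Prop :=
  ∀ A ∈ 𝒜, ∀ f : (↥A) →ₗ[R] T, ∃ g : M →ₗ[R] T, g ∘ₗ A.subtype = f

/-- `T` is strongly `M`-`𝒜`-injective if `Ext¹_R(M/A, T) = 0` for all `A ∈ 𝒜`. -/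
def SMAInjective (𝒜 : Set (Submodule R M)) (T : Type u) [AddCommGroup T] [Module R T] : Prop :=
  ∀ A ∈ 𝒜, Ext1IsZero R (M ⧸ A) T

/-- A right `R`-module `N` is `M`-`𝒜`-flat if `N ⊗ A → N ⊗ M` is injective for all `A ∈ 𝒜`. -/
def MAFlat (𝒜 : Set (Submodule R M)) (N : Type u) [AddCommGroup N] [Module Rᵐᵒᵖ N] : Prop :=
  ∀ A ∈ 𝒜, Function.Injective (ncMap R N A.subtype)

/-- A right `R`-module `N` is strongly `M`-`𝒜`-flat if `Tor₁^R(N, M/A) = 0` for all `A ∈ 𝒜`. -/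
def SMAFlat (𝒜 : Set (Submodule R M)) (N : Type u) [AddCommGroup N] [Module Rᵐᵒᵖ N] : Prop :=
  ∀ A ∈ 𝒜, Tor1IsZero R N (M ⧸ A)

end Classes

section Flat

variable (R : Type u) [Ring R]

/-- A left `R`-module `Z` is flat if tensoring with it preserves injectivity of morphisms of
right `R`-modules. -/
def FlatLeftModule (Z : Type u) [AddCommGroup Z] [Module R Z] : Prop :=
  ∀ (N N' : Type u) [AddCommGroup N] [Module Rᵐᵒᵖ N] [AddCommGroup N'] [Module Rᵐᵒᵖ N']
    (g : N' →ₗ[Rᵐᵒᵖ] N), Function.Injective g → Function.Injective (ncMapL R g Z)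

end Flat

section Summand

variable {R : Type u} [Ring R] {M : Type u} [AddCommGroup M] [Module R M]

theorem exists_isCompl_of_MAInjective_self {𝒜 : Set (Submodule R M)} {A : Submodule R M}
    (hA : A ∈ 𝒜) (hinj : MAInjective R M 𝒜 A) : ∃ B : Submodule R M, IsCompl A B :=
  let ⟨g, hg⟩ := hinj A hA LinearMap.id
  ⟨LinearMap.ker g, LinearMap.isCompl_of_proj (LinearMap.congr_fun hg)⟩

theorem MAInjective_of_forall_exists_isCompl {𝒜 : Set (Submodule R M)}
    (h𝒜 : ∀ A ∈ 𝒜, ∃ B : Submodule R M, IsCompl A B)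
    (T : Type u) [AddCommGroup T] [Module R T] : MAInjective R M 𝒜 T := by
  intro A hA f
  obtain ⟨B, hAB⟩ := h𝒜 A hA
  exact ⟨LinearMap.ofIsCompl hAB f 0, LinearMap.ext (LinearMap.ofIsCompl_apply_left hAB)⟩

end Summand

/-- The following are equivalent: (i) every `A ∈ 𝒜` is an `M`-`𝒜`-injective left `R`-module;
(ii) every `A ∈ 𝒜` is a direct summand of `M`; (iii) every left `R`-module is
`M`-`𝒜`-injective. -/
theorem stmt18 (R : Type u) [Ring R] (M : Type u) [AddCommGroup M] [Module R M]
    (𝒜 : Set (Submodule R M)) :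
    List.TFAE [
      ∀ A ∈ 𝒜, MAInjective R M 𝒜 (↥A),
      ∀ A ∈ 𝒜, ∃ B : Submodule R M, IsCompl A B,
      ∀ (T : Type u) [AddCommGroup T] [Module R T], MAInjective R M 𝒜 T] := by
  tfae_have 1 → 2 := fun h A hA => exists_isCompl_of_MAInjective_self hA (h A hA)
  tfae_have 2 → 3 := fun h T _ _ => MAInjective_of_forall_exists_isCompl h T
  tfae_have 3 → 1 := fun h A _ => h A
  tfae_finish
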